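/- Consider the QCQP data n, m ∈ ℕ with n ≥ 1, vectors a⁰, a¹, …, aᵐ ∈ ℝⁿ, c^{x,0}, …, c^{x,m} ∈ ℝⁿ, c^{y,0}, …, c^{y,m} ∈ ℝⁿ, and b ∈ ℝᵐ. Let F_Mc be the set of tuples (x, y, u, w) ∈ ℝⁿ × ℝⁿ × ℝ^{2n} × ℝ^{2n×2n} such that: x_i = u_i and y_i = u_{n+i} for all i ∈ [n]; u ∈ [0,1]^{2n}; max{u_i + u_k − 1, 0} ≤ w_{ik} ≤ min{u_i, u_k} for all (i,k) ∈ [2n] × [2n]; and ∑_{i∈[n]} a^j_i w_{i, n+i} + ∑_{i∈[n]} c^{x,j}_i x_i + ∑_{i∈[n]} c^{y,j}_i y_i ≥ b_j for all j ∈ [m]. Let F_MS be the subset of F_Mc consisting of tuples for which additionally the (2n+1) × (2n+1) block matrix W = [[1, uᵀ],[u, w]] is positive semidefinite. Then for every (x, y, u, w) ∈ F_Mc there exists w' ∈ ℝ^{2n×2n} such that (x, y, u, w') ∈ F_MS and w'_{i, n+i} = w_{i, n+i} for all i ∈ [n]. -/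

import Mathlib

/-!
Read `u` as the means of Bernoulli variables `X_i = u (inl i)`, `Y_i = u (inr i)` and
`w_{i,n+i}` as `P(X_i = Y_i = 1)`; the McCormick inequalities for the pair `i` say exactly that
the four cell probabilities of `(X_i, Y_i)` are nonnegative, so such a joint law exists. Making
the pairs independent of each other, `w'` is the second-moment matrix `E[Z Zᵀ]` of
`Z = (X, Y) ∈ {0,1}^{2n}`: it keeps the entries `w_{i,n+i}`, it satisfies all McCormick
inequalities since `Z` is 0/1-valued, and the moment matrix is `E[(1, Z)(1, Z)ᵀ] ⪰ 0`.
Concretely `w' = u uᵀ + Σ` with `Σ` the block-diagonal covariance, and positivity of the moment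
matrix is the Schur complement condition `Σ ⪰ 0`.
-/

open Matrix Set

def InMcCormickEnvelope (p q t : ℝ) : Prop :=
  max (p + q - 1) 0 ≤ t ∧ t ≤ min p q

namespace InMcCormickEnvelope

variable {p q t : ℝ}

theorem symm (h : InMcCormickEnvelope p q t) : InMcCormickEnvelope q p t := by
  rwa [InMcCormickEnvelope, add_comm q, min_comm]

theorem mul (hp : p ∈ Icc (0 : ℝ) 1) (hq : q ∈ Icc (0 : ℝ) 1) :
    InMcCormickEnvelope p q (p * q) := by
  obtain ⟨hp0, hp1⟩ := hp
  obtain ⟨hq0, hq1⟩ := hq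
  refine ⟨max_le ?_ (mul_nonneg hp0 hq0), le_min ?_ ?_⟩ <;>
    nlinarith [mul_nonneg (sub_nonneg.2 hp1) (sub_nonneg.2 hq1)]

theorem self (hp : p ∈ Icc (0 : ℝ) 1) : InMcCormickEnvelope p p p :=
  ⟨max_le (by linarith [hp.2]) hp.1, (min_self p).ge⟩

/-- `Cov² ≤ Var · Var` for the Bernoulli pair with means `p`, `q` and `P(both = 1) = t`. -/
theorem sq_sub_mul_le (h : InMcCormickEnvelope p q t) :
    (t - p * q) ^ 2 ≤ (p - p ^ 2) * (q - q ^ 2) := by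
  obtain ⟨⟨h₁, h₀⟩, h₂⟩ := And.imp max_le_iff.1 le_min_iff.1 h
  nlinarith [mul_nonneg (sub_nonneg.2 h₂.1) (sub_nonneg.2 h₂.2),
    mul_nonneg h₀ (by linarith : (0:ℝ) ≤ 1 - p - q + t),
    mul_nonneg (sub_nonneg.2 h₂.1) (by linarith : (0:ℝ) ≤ 1 - p - q + t),
    mul_nonneg h₀ (sub_nonneg.2 h₂.2)]

end InMcCormickEnvelope

theorem binary_quadratic_nonneg {a b c x y : ℝ} (ha : 0 ≤ a) (hb : 0 ≤ b) (hc : c ^ 2 ≤ a * b) :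
    0 ≤ a * x ^ 2 + 2 * c * x * y + b * y ^ 2 := by
  rcases ha.eq_or_lt with rfl | ha
  · obtain rfl : c = 0 := by nlinarith
    nlinarith [mul_nonneg hb (sq_nonneg y)]
  · nlinarith [sq_nonneg (a * x + c * y), mul_nonneg (sub_nonneg.2 hc) (sq_nonneg y)]

namespace Matrix

variable {ι : Type*} [Fintype ι]

theorem posSemidef_fromBlocks_diagonal [DecidableEq ι] {a b c : ι → ℝ} (ha : 0 ≤ a) (hb : 0 ≤ b)
    (hc : ∀ i, c i ^ 2 ≤ a i * b i) :
    (fromBlocks (diagonal a) (diagonal c) (diagonal c) (diagonal b)).PosSemidef := by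
  refine .of_dotProduct_mulVec_nonneg ?_ fun v => ?_
  · exact IsSymm.fromBlocks (isSymm_diagonal a) (diagonal_transpose c) (isSymm_diagonal b)
  · obtain ⟨x, y, rfl⟩ : ∃ x y, v = Sum.elim x y := ⟨_, _, (Sum.elim_comp_inl_inr v).symm⟩
    rw [star_trivial, fromBlocks_mulVec, sumElim_dotProduct_sumElim]
    simp only [Sum.elim_comp_inl, Sum.elim_comp_inr, dotProduct, Pi.add_apply, mulVec_diagonal,
      ← Finset.sum_add_distrib]
    refine Finset.sum_nonneg fun i _ => ?_
    nlinarith [binary_quadratic_nonneg (x := x i) (y := y i) (ha i) (hb i) (hc i)]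

def momentMatrix (u : ι → ℝ) (W : Matrix ι ι ℝ) : Matrix (Option ι) (Option ι) ℝ :=
  Matrix.of fun i j =>
    match i, j with
    | none, none => 1
    | none, some l => u l
    | some k, none => u k
    | some k, some l => W k l

theorem posSemidef_momentMatrix_iff (u : ι → ℝ) (W : Matrix ι ι ℝ) :
    (momentMatrix u W).PosSemidef ↔ (W - vecMulVec u u).PosSemidef := by
  have hblocks : momentMatrix u W =
      (fromBlocks W (replicateCol Unit u) (replicateCol Unit u)ᴴ
        (1 : Matrix Unit Unit ℝ)).submatrix
          (Equiv.optionEquivSumPUnit ι) (Equiv.optionEquivSumPUnit ι) := by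
    ext (_ | k) (_ | l) <;> rfl
  let : Invertible (1 : Matrix Unit Unit ℝ) := invertibleOne
  rw [hblocks, posSemidef_submatrix_equiv, PosDef.fromBlocks₂₂ _ _ PosDef.one, inv_one,
    Matrix.mul_one, conjTranspose_replicateCol, star_trivial, ← vecMulVec_eq]

end Matrix

section

variable {ι : Type*} [DecidableEq ι] (u : ι ⊕ ι → ℝ) (t : ι → ℝ)

def pairCovariance : Matrix (ι ⊕ ι) (ι ⊕ ι) ℝ :=
  fromBlocks (diagonal fun i => u (.inl i) - u (.inl i) ^ 2)
    (diagonal fun i => t i - u (.inl i) * u (.inr i))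
    (diagonal fun i => t i - u (.inl i) * u (.inr i))
    (diagonal fun i => u (.inr i) - u (.inr i) ^ 2)

def extendedMoment : Matrix (ι ⊕ ι) (ι ⊕ ι) ℝ :=
  vecMulVec u u + pairCovariance u t

theorem extendedMoment_inl_inr (i : ι) : extendedMoment u t (.inl i) (.inr i) = t i := by
  simp [extendedMoment, pairCovariance, vecMulVec_apply]

variable {u t}

theorem inMcCormickEnvelope_extendedMoment (hu : ∀ k, u k ∈ Icc (0 : ℝ) 1)
    (ht : ∀ i, InMcCormickEnvelope (u (.inl i)) (u (.inr i)) (t i)) (k l : ι ⊕ ι) :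
    InMcCormickEnvelope (u k) (u l) (extendedMoment u t k l) := by
  rcases k with i | i <;> rcases l with j | j <;> by_cases hij : i = j <;>
    simp [extendedMoment, pairCovariance, vecMulVec_apply, hij]
  all_goals first
    | exact .mul (hu _) (hu _)
    | exact ht _
    | convert (ht _).symm using 1; ring
    | convert InMcCormickEnvelope.self (hu _) using 1; ring

theorem posSemidef_pairCovariance [Fintype ι] (hu : ∀ k, u k ∈ Icc (0 : ℝ) 1)
    (ht : ∀ i, InMcCormickEnvelope (u (.inl i)) (u (.inr i)) (t i)) :
    (pairCovariance u t).PosSemidef := by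
  have hvar : ∀ p ∈ Icc (0 : ℝ) 1, 0 ≤ p - p ^ 2 := fun p ⟨hp0, hp1⟩ => by nlinarith
  exact posSemidef_fromBlocks_diagonal (fun i => hvar _ (hu _)) (fun i => hvar _ (hu _))
    fun i => (ht i).sq_sub_mul_le

end

theorem stmt_11 (n m : ℕ)
    (a cx cy : Fin m → Fin n → ℝ) (b : Fin m → ℝ)
    (x y : Fin n → ℝ) (u : Fin n ⊕ Fin n → ℝ)
    (w : Matrix (Fin n ⊕ Fin n) (Fin n ⊕ Fin n) ℝ)
    -- (x, y, u, w) ∈ F_Mc :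
    (hu : ∀ i, u i ∈ Set.Icc (0 : ℝ) 1)
    (hw : ∀ i k, max (u i + u k - 1) 0 ≤ w i k ∧ w i k ≤ min (u i) (u k))
    (hlin : ∀ j, b j ≤ ∑ i, a j i * w (Sum.inl i) (Sum.inr i)
                        + ∑ i, cx j i * x i + ∑ i, cy j i * y i) :
    -- there is w' with (x, y, u, w') ∈ F_MS and w'_{i,n+i} = w_{i,n+i} :
    ∃ w' : Matrix (Fin n ⊕ Fin n) (Fin n ⊕ Fin n) ℝ,
      (∀ i k, max (u i + u k - 1) 0 ≤ w' i k ∧ w' i k ≤ min (u i) (u k)) ∧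
      (∀ j, b j ≤ ∑ i, a j i * w' (Sum.inl i) (Sum.inr i)
                  + ∑ i, cx j i * x i + ∑ i, cy j i * y i) ∧
      Matrix.PosSemidef (Matrix.of fun i j : Option (Fin n ⊕ Fin n) =>
        match i, j with
        | none, none => (1 : ℝ)
        | none, some l => u l
        | some k, none => u k
        | some k, some l => w' k l) ∧
      (∀ i, w' (Sum.inl i) (Sum.inr i) = w (Sum.inl i) (Sum.inr i)) := by
  set t : Fin n → ℝ := fun i => w (.inl i) (.inr i)
  have ht : ∀ i, InMcCormickEnvelope (u (.inl i)) (u (.inr i)) (t i) := fun i => hw _ _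
  have hfix : ∀ i, extendedMoment u t (.inl i) (.inr i) = t i := extendedMoment_inl_inr u t
  refine ⟨extendedMoment u t, inMcCormickEnvelope_extendedMoment hu ht, ?_, ?_, hfix⟩
  · simpa only [hfix] using hlin
  · convert (posSemidef_momentMatrix_iff u (extendedMoment u t)).2 ?_ using 1
    -- the statement's `match` is a different auxiliary matcher: equal to ours only entrywise
    · ext (_ | k) (_ | l) <;> rfl
    · rw [extendedMoment, add_sub_cancel_left]
      exact posSemidef_pairCovariance hu ht
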